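/- If μ is a Borel measure on ℝⁿ finite on dyadic cubes and f ∈ L²(μ), then ∑_{Q∈𝒟} |⟨f⟩^μ_{Q^{(1)}} − ⟨f⟩^μ_Q|² μ(Q) ≤ C‖f‖²_{L²(μ)}, where Q^{(1)} denotes the dyadic parent of Q and the constant C is universal (depending only on n). -/

import Mathlib

open MeasureTheory Filter
open scoped ENNReal

/-- A dyadic cube in `ℝⁿ`, encoded by its generation `k` (side length `2 ^ k`)
and position `m` (corner at `m * 2 ^ k`). -/
structure DyadicCube (n : ℕ) where
  k : ℤ
  m : Fin n → ℤ

namespace DyadicCube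

variable {n : ℕ}

/-- The underlying half-open cube in `ℝⁿ`. -/
def toSet (Q : DyadicCube n) : Set (Fin n → ℝ) :=
  {x | ∀ i, (Q.m i : ℝ) * (2 : ℝ) ^ Q.k ≤ x i ∧ x i < ((Q.m i : ℝ) + 1) * (2 : ℝ) ^ Q.k}

/-- The side length `ℓ(Q)` of the cube. -/
noncomputable def len (Q : DyadicCube n) : ℝ := (2 : ℝ) ^ Q.k

/-- The dyadic parent `Q^{(1)}`. -/
def parent (Q : DyadicCube n) : DyadicCube n :=
  ⟨Q.k + 1, fun i => Int.fdiv (Q.m i) 2⟩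

/-- The ancestor `Q^{(r)}` of order `r`. -/
def iterParent (Q : DyadicCube n) (r : ℕ) : DyadicCube n := parent^[r] Q

/-- The dyadic child of `Q` indexed by `ε : Fin n → Bool`. -/
def child (Q : DyadicCube n) (ε : Fin n → Bool) : DyadicCube n :=
  ⟨Q.k - 1, fun i => 2 * Q.m i + (if ε i then 1 else 0)⟩

/-- The descendant of `Q` of order `r` indexed by `v`; these enumerate `ch^r Q`. -/
def childIter (Q : DyadicCube n) (r : ℕ) (v : Fin n → Fin (2 ^ r)) : DyadicCube n :=
  ⟨Q.k - r, fun i => 2 ^ r * Q.m i + ((v i : ℕ) : ℤ)⟩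

end DyadicCube

variable {n : ℕ}

/-- The `μ`-average of `f` over a dyadic cube (zero when the cube is `μ`-null). -/
noncomputable def avg (μ : Measure (Fin n → ℝ)) (f : (Fin n → ℝ) → ℝ) (Q : DyadicCube n) : ℝ :=
  if μ Q.toSet = 0 then 0 else (∫ x in Q.toSet, f x ∂μ) / (μ Q.toSet).toReal

/-- The expectation `E^b_Q f = (⟨f⟩_Q / ⟨b⟩_Q) · b · 1_Q` adapted to an accretive function `b`. -/
noncomputable def Eb (μ : Measure (Fin n → ℝ)) (b f : (Fin n → ℝ) → ℝ) (Q : DyadicCube n) :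
    (Fin n → ℝ) → ℝ :=
  fun x => (avg μ f Q / avg μ b Q) * Q.toSet.indicator b x

/-- The martingale difference `Δ^b_Q f = ∑_{Q' ∈ ch Q} E^b_{Q'} f − E^b_Q f`. -/
noncomputable def Db (μ : Measure (Fin n → ℝ)) (b f : (Fin n → ℝ) → ℝ) (Q : DyadicCube n) :
    (Fin n → ℝ) → ℝ :=
  fun x => (∑ ε : Fin n → Bool, Eb μ b f (Q.child ε) x) - Eb μ b f Q x

/-- The expectation `E^μ_Q f = (⟨f⟩_Q / ⟨b_Q⟩_Q) b_Q` adapted to an accretive system. -/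
noncomputable def Esys (μ : Measure (Fin n → ℝ)) (b : DyadicCube n → (Fin n → ℝ) → ℝ)
    (f : (Fin n → ℝ) → ℝ) (Q : DyadicCube n) : (Fin n → ℝ) → ℝ :=
  fun x => (avg μ f Q / avg μ (b Q) Q) * b Q x

/-- The martingale difference `Δ^μ_Q` adapted to an accretive system. -/
noncomputable def Dsys (μ : Measure (Fin n → ℝ)) (b : DyadicCube n → (Fin n → ℝ) → ℝ)
    (f : (Fin n → ℝ) → ℝ) (Q : DyadicCube n) : (Fin n → ℝ) → ℝ :=
  fun x => (∑ ε : Fin n → Bool, Esys μ b f (Q.child ε) x) - Esys μ b f Q x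

/-- The (formal) adjoint `(Δ^μ_Q)^*`, given by its explicit formula. -/
noncomputable def DsysStar (μ : Measure (Fin n → ℝ)) (b : DyadicCube n → (Fin n → ℝ) → ℝ)
    (f : (Fin n → ℝ) → ℝ) (Q : DyadicCube n) : (Fin n → ℝ) → ℝ :=
  fun x => ∑ ε : Fin n → Bool,
    (Q.child ε).toSet.indicator
      (fun _ => avg μ (fun y => b (Q.child ε) y * f y) (Q.child ε)
                  / avg μ (b (Q.child ε)) (Q.child ε)
                - avg μ (fun y => b Q y * f y) Q / avg μ (b Q) Q) x

/-- The set `𝒮_b` of cubes where the accretive system changes between generations. -/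
def Sb (b : DyadicCube n → (Fin n → ℝ) → ℝ) : Set (DyadicCube n) :=
  {Q | b Q ≠ fun x => Q.toSet.indicator (b Q.parent) x}

/-- An `L^∞(μ)`-accretive system with constants `δ` and `C`. -/
structure AccretiveSystem (μ : Measure (Fin n → ℝ)) (b : DyadicCube n → (Fin n → ℝ) → ℝ)
    (δ C : ℝ) : Prop where
  meas : ∀ Q : DyadicCube n, Measurable (b Q)
  supp : ∀ Q : DyadicCube n, ∀ x, x ∉ Q.toSet → b Q x = 0
  bdd : ∀ Q : DyadicCube n, eLpNorm (b Q) ∞ μ ≤ ENNReal.ofReal C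
  acc : ∀ Q : DyadicCube n, δ * (μ Q.toSet).toReal ≤ |∫ x in Q.toSet, b Q x ∂μ|

/-- A family of dyadic cubes is `μ`-sparse (i.e. `μ`-Carleson) with constant `Λ`. -/
def IsSparse (μ : Measure (Fin n → ℝ)) (S : Set (DyadicCube n)) (Λ : ℝ≥0∞) : Prop :=
  ∀ R : DyadicCube n,
    ∑' Q : {Q : DyadicCube n // Q ∈ S ∧ Q.toSet ⊆ R.toSet}, μ Q.1.toSet ≤ Λ * μ R.toSet
namespace DyadicCube

variable {n : ℕ}

lemma ext' {Q R : DyadicCube n} (hk : Q.k = R.k) (hm : Q.m = R.m) : Q = R := by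
  cases Q; cases R; simp_all

lemma toSet_eq_pi (Q : DyadicCube n) :
    Q.toSet = Set.univ.pi fun i =>
      Set.Ico ((Q.m i : ℝ) * (2:ℝ) ^ Q.k) (((Q.m i : ℝ) + 1) * (2:ℝ) ^ Q.k) := by
  ext x; simp [toSet, Set.mem_pi, Set.mem_Ico]

lemma measurableSet_toSet (Q : DyadicCube n) : MeasurableSet Q.toSet := by
  rw [toSet_eq_pi]; exact MeasurableSet.univ_pi fun i => measurableSet_Ico

private lemma int_eq_of_mem {a b : ℤ} {c x : ℝ} (hc : 0 < c)
    (ha1 : (a:ℝ) * c ≤ x) (ha2 : x < ((a:ℝ) + 1) * c)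
    (hb1 : (b:ℝ) * c ≤ x) (hb2 : x < ((b:ℝ) + 1) * c) : a = b := by
  by_contra h
  rcases lt_or_gt_of_ne h with h' | h'
  · have : (a:ℝ) + 1 ≤ (b:ℝ) := by exact_mod_cast h'
    nlinarith
  · have : (b:ℝ) + 1 ≤ (a:ℝ) := by exact_mod_cast h'
    nlinarith

lemma disjoint_of_ne {Q R : DyadicCube n} (hk : Q.k = R.k) (h : Q ≠ R) :
    Disjoint Q.toSet R.toSet := by
  rw [Set.disjoint_left]
  intro x hQ hR
  apply h
  refine ext' hk (funext fun i => ?_)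
  have h1 := hQ i
  have h2 := hR i
  rw [hk] at h1
  exact int_eq_of_mem (by positivity) h1.1 h1.2 h2.1 h2.2

lemma parent_child (Q : DyadicCube n) (ε : Fin n → Bool) : (Q.child ε).parent = Q := by
  refine ext' (by simp [child, parent]) (funext fun i => ?_)
  simp only [child, parent]
  rw [Int.fdiv_eq_ediv_of_nonneg _ (by norm_num)]
  cases ε i <;> simp <;> omega

lemma child_injective (Q : DyadicCube n) : Function.Injective Q.child := by
  intro ε ε' h
  funext i
  have := congrFun (congrArg DyadicCube.m h) i
  simp only [child] at this
  cases hε : ε i <;> cases hε' : ε' i <;> simp [hε, hε'] at this ⊢ <;> omega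

lemma two_zpow_eq (k : ℤ) : (2:ℝ) ^ k = (2:ℝ) ^ (k - 1) * 2 := by
  rw [← zpow_add_one₀ (two_ne_zero) (k - 1), sub_add_cancel]

lemma child_subset (Q : DyadicCube n) (ε : Fin n → Bool) : (Q.child ε).toSet ⊆ Q.toSet := by
  intro x hx i
  have h := hx i
  simp only [child] at h
  have hc : (0:ℝ) < (2:ℝ) ^ (Q.k - 1) := by positivity
  rw [two_zpow_eq Q.k]
  constructor
  · calc (Q.m i : ℝ) * ((2:ℝ) ^ (Q.k - 1) * 2)
        = ((2 * Q.m i : ℤ) : ℝ) * (2:ℝ) ^ (Q.k - 1) := by push_cast; ring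
      _ ≤ ((2 * Q.m i + (if ε i then 1 else 0) : ℤ) : ℝ) * (2:ℝ) ^ (Q.k - 1) := by
          apply mul_le_mul_of_nonneg_right _ hc.le
          exact_mod_cast by cases ε i <;> simp
      _ ≤ x i := h.1
  · calc x i < ((2 * Q.m i + (if ε i then 1 else 0) : ℤ) + 1 : ℝ) * (2:ℝ) ^ (Q.k - 1) := by
          exact_mod_cast h.2
      _ ≤ ((2 * Q.m i + 2 : ℤ) : ℝ) * (2:ℝ) ^ (Q.k - 1) := by
          apply mul_le_mul_of_nonneg_right _ hc.le
          push_cast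
          cases ε i <;> simp <;> linarith
      _ = ((Q.m i : ℝ) + 1) * ((2:ℝ) ^ (Q.k - 1) * 2) := by push_cast; ring

lemma mem_union_child (Q : DyadicCube n) {x : Fin n → ℝ} (hx : x ∈ Q.toSet) :
    ∃ ε : Fin n → Bool, x ∈ (Q.child ε).toSet := by
  classical
  refine ⟨fun i => decide (((2 * Q.m i + 1 : ℤ) : ℝ) * (2:ℝ) ^ (Q.k - 1) ≤ x i), fun i => ?_⟩
  have h := hx i
  rw [two_zpow_eq Q.k] at h
  have hc : (0:ℝ) < (2:ℝ) ^ (Q.k - 1) := by positivity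
  simp only [child]
  by_cases hb : ((2 * Q.m i + 1 : ℤ) : ℝ) * (2:ℝ) ^ (Q.k - 1) ≤ x i
  · simp only [decide_eq_true_eq, if_pos hb]
    push_cast at h hb ⊢
    constructor
    · linarith
    · nlinarith [h.2]
  · simp only [decide_eq_true_eq, if_neg hb]
    push_cast at h hb ⊢
    constructor
    · nlinarith [h.1]
    · nlinarith [not_le.mp hb]

lemma iUnion_child (Q : DyadicCube n) : (⋃ ε : Fin n → Bool, (Q.child ε).toSet) = Q.toSet := by
  apply Set.Subset.antisymm
  · exact Set.iUnion_subset fun ε => child_subset Q ε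
  · intro x hx
    obtain ⟨ε, hε⟩ := mem_union_child Q hx
    exact Set.mem_iUnion.mpr ⟨ε, hε⟩

lemma pairwise_disjoint_child (Q : DyadicCube n) :
    Pairwise (Function.onFun Disjoint fun ε : Fin n → Bool => (Q.child ε).toSet) := by
  intro ε ε' h
  exact disjoint_of_ne rfl (fun he => h (child_injective Q he))

/-- Reindexing integers by (quotient, parity bit). -/
def intBitEquiv : ℤ ≃ ℤ × Bool where
  toFun m := (m.fdiv 2, decide (m.fmod 2 = 1))
  invFun p := 2 * p.1 + (if p.2 then 1 else 0)
  left_inv m := by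
    have h := Int.fmod_add_fdiv_mul m 2
    have h1 : 0 ≤ m.fmod 2 := Int.fmod_nonneg_of_pos m (by norm_num)
    have h2 : m.fmod 2 < 2 := Int.fmod_lt_of_pos m (by norm_num)
    rcases (by omega : m.fmod 2 = 0 ∨ m.fmod 2 = 1) with h3 | h3 <;> simp [h3] <;> omega
  right_inv p := by
    obtain ⟨q, b⟩ := p
    have he : ∀ a : ℤ, a.fdiv 2 = a / 2 := fun a => Int.fdiv_eq_ediv_of_nonneg a (by norm_num)
    have hm : ∀ a : ℤ, a.fmod 2 = a % 2 := fun a => Int.fmod_eq_emod_of_nonneg a (by norm_num)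
    cases b <;> simp [he, hm] <;> omega

end DyadicCube

/-- Reindexing integer vectors by (quotient vector, parity-bit vector). -/
def vecBitEquiv (n : ℕ) : (Fin n → ℤ) ≃ (Fin n → ℤ) × (Fin n → Bool) where
  toFun m := (fun i => (m i).fdiv 2, fun i => decide ((m i).fmod 2 = 1))
  invFun p := fun i => 2 * p.1 i + (if p.2 i then 1 else 0)
  left_inv m := funext fun i => DyadicCube.intBitEquiv.left_inv (m i)
  right_inv p := by
    refine Prod.ext (funext fun i => ?_) (funext fun i => ?_)
    · exact congrArg Prod.fst (DyadicCube.intBitEquiv.right_inv (p.1 i, p.2 i))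
    · exact congrArg Prod.snd (DyadicCube.intBitEquiv.right_inv (p.1 i, p.2 i))

def cubeEquiv (n : ℕ) : ℤ × (Fin n → ℤ) ≃ DyadicCube n where
  toFun p := ⟨p.1, p.2⟩
  invFun Q := (Q.k, Q.m)
  left_inv p := rfl
  right_inv Q := by cases Q; rfl

lemma cube_child_eq {n : ℕ} (k : ℤ) (q : Fin n → ℤ) (ε : Fin n → Bool) :
    (⟨k, fun i => 2 * q i + (if ε i then 1 else 0)⟩ : DyadicCube n)
      = DyadicCube.child ⟨k + 1, q⟩ ε :=
  DyadicCube.ext' (by simp [DyadicCube.child]) rfl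

/-- Grouping a generation-level sum by parents. -/
lemma tsum_level {n : ℕ} (g : DyadicCube n → ℝ≥0∞) (k : ℤ) :
    ∑' m : Fin n → ℤ, g ⟨k, m⟩
      = ∑' q : Fin n → ℤ, ∑ ε : Fin n → Bool, g (DyadicCube.child ⟨k + 1, q⟩ ε) := by
  rw [← Equiv.tsum_eq (vecBitEquiv n).symm (fun m => g ⟨k, m⟩), ENNReal.tsum_prod']
  refine tsum_congr fun q => ?_
  rw [tsum_fintype]
  refine Finset.sum_congr rfl fun ε _ => ?_
  have : (vecBitEquiv n).symm (q, ε) = fun i => 2 * q i + (if ε i then 1 else 0) := rfl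
  rw [this, cube_child_eq]

section Analysis

variable {n : ℕ} {μ : Measure (Fin n → ℝ)} {f : (Fin n → ℝ) → ℝ}

/-- The square-function summand. -/
noncomputable def tq (μ : Measure (Fin n → ℝ)) (f : (Fin n → ℝ) → ℝ) (Q : DyadicCube n) : ℝ≥0∞ :=
  ENNReal.ofReal ((avg μ f Q.parent - avg μ f Q) ^ 2) * μ Q.toSet

/-- The quantity `⟨f⟩_Q² μ(Q)`. -/
noncomputable def Fq (μ : Measure (Fin n → ℝ)) (f : (Fin n → ℝ) → ℝ) (Q : DyadicCube n) : ℝ≥0∞ :=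
  ENNReal.ofReal ((avg μ f Q) ^ 2 * (μ Q.toSet).toReal)

lemma isFiniteRestrict (hμ : ∀ Q : DyadicCube n, μ Q.toSet < ⊤) (Q : DyadicCube n) :
    IsFiniteMeasure (μ.restrict Q.toSet) :=
  ⟨by rw [Measure.restrict_apply_univ]; exact hμ Q⟩

lemma integrableOn_cube (hμ : ∀ Q : DyadicCube n, μ Q.toSet < ⊤) (hf : MemLp f 2 μ)
    (Q : DyadicCube n) : IntegrableOn f Q.toSet μ := by
  have := isFiniteRestrict hμ Q
  exact (hf.restrict Q.toSet).integrable (by norm_num)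

lemma integrableOn_sq_cube (hμ : ∀ Q : DyadicCube n, μ Q.toSet < ⊤) (hf : MemLp f 2 μ)
    (Q : DyadicCube n) : IntegrableOn (fun x => f x ^ 2) Q.toSet μ := by
  have := isFiniteRestrict hμ Q
  exact (hf.restrict Q.toSet).integrable_sq

lemma avg_mul_toReal (hμ : ∀ Q : DyadicCube n, μ Q.toSet < ⊤) (Q : DyadicCube n) :
    avg μ f Q * (μ Q.toSet).toReal = ∫ x in Q.toSet, f x ∂μ := by
  by_cases h : μ Q.toSet = 0
  · rw [avg, if_pos h, Measure.restrict_eq_zero.mpr h]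
    simp
  · rw [avg, if_neg h, div_mul_cancel₀]
    exact ENNReal.toReal_ne_zero.mpr ⟨h, (hμ Q).ne⟩

lemma measure_children (P : DyadicCube n) :
    μ P.toSet = ∑ ε : Fin n → Bool, μ (P.child ε).toSet := by
  rw [← DyadicCube.iUnion_child P,
    measure_iUnion (DyadicCube.pairwise_disjoint_child P)
      (fun ε => DyadicCube.measurableSet_toSet _), tsum_fintype]

lemma integral_children (hμ : ∀ Q : DyadicCube n, μ Q.toSet < ⊤) (hf : MemLp f 2 μ)
    (P : DyadicCube n) :
    ∫ x in P.toSet, f x ∂μ = ∑ ε : Fin n → Bool, ∫ x in (P.child ε).toSet, f x ∂μ := by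
  conv_lhs => rw [← DyadicCube.iUnion_child P]
  rw [MeasureTheory.integral_iUnion (fun ε => DyadicCube.measurableSet_toSet _)
    (DyadicCube.pairwise_disjoint_child P)
    (by rw [DyadicCube.iUnion_child P]; exact integrableOn_cube hμ hf P), tsum_fintype]

lemma sq_avg_mul_le (hμ : ∀ Q : DyadicCube n, μ Q.toSet < ⊤) (hf : MemLp f 2 μ)
    (Q : DyadicCube n) :
    (avg μ f Q) ^ 2 * (μ Q.toSet).toReal ≤ ∫ x in Q.toSet, f x ^ 2 ∂μ := by
  have hfin := isFiniteRestrict hμ Q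
  set b := avg μ f Q with hb
  set t := (μ Q.toSet).toReal with ht
  have hi1 : Integrable f (μ.restrict Q.toSet) := integrableOn_cube hμ hf Q
  have hi2 : Integrable (fun x => f x ^ 2) (μ.restrict Q.toSet) := integrableOn_sq_cube hμ hf Q
  have h0 : 0 ≤ ∫ x in Q.toSet, (f x - b) ^ 2 ∂μ := integral_nonneg fun x => sq_nonneg _
  have hint : ∫ x in Q.toSet, f x ∂μ = b * t := (avg_mul_toReal hμ Q).symm
  have e1 : ∫ x in Q.toSet, (f x - b) ^ 2 ∂μ
      = ∫ x in Q.toSet, ((f x ^ 2 - 2 * b * f x) + b ^ 2) ∂μ :=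
    integral_congr_ae (Filter.Eventually.of_forall fun x => by ring)
  have e2 : (∫ x in Q.toSet, (f x ^ 2 - 2 * b * f x) ∂μ) + ∫ _x in Q.toSet, (b ^ 2 : ℝ) ∂μ
      = ∫ x in Q.toSet, ((f x ^ 2 - 2 * b * f x) + b ^ 2) ∂μ :=
    (integral_add (hi2.sub (hi1.const_mul (2 * b))) (integrable_const _)).symm
  have e3 : ∫ x in Q.toSet, (f x ^ 2 - 2 * b * f x) ∂μ
      = (∫ x in Q.toSet, f x ^ 2 ∂μ) - ∫ x in Q.toSet, 2 * b * f x ∂μ :=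
    integral_sub hi2 (hi1.const_mul (2 * b))
  have e4 : ∫ x in Q.toSet, 2 * b * f x ∂μ = 2 * b * ∫ x in Q.toSet, f x ∂μ :=
    integral_const_mul _ _
  have e5 : ∫ _x in Q.toSet, (b ^ 2 : ℝ) ∂μ = b ^ 2 * t := by
    rw [integral_const, measureReal_restrict_apply_univ]
    simp [ht, smul_eq_mul, mul_comm, Measure.real]
  rw [e1, ← e2, e3, e4, hint, e5] at h0
  ring_nf at h0 ⊢
  linarith [h0]

lemma Fq_le_lintegral (hμ : ∀ Q : DyadicCube n, μ Q.toSet < ⊤) (hf : MemLp f 2 μ)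
    (Q : DyadicCube n) :
    Fq μ f Q ≤ ∫⁻ x in Q.toSet, ENNReal.ofReal (f x ^ 2) ∂μ := by
  calc Fq μ f Q ≤ ENNReal.ofReal (∫ x in Q.toSet, f x ^ 2 ∂μ) :=
        ENNReal.ofReal_le_ofReal (sq_avg_mul_le hμ hf Q)
    _ = ∫⁻ x in Q.toSet, ENNReal.ofReal (f x ^ 2) ∂μ :=
        MeasureTheory.ofReal_integral_eq_lintegral_ofReal (integrableOn_sq_cube hμ hf Q)
          (Filter.Eventually.of_forall fun x => sq_nonneg _)

/-- The per-parent martingale identity. -/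
lemma parent_identity (hμ : ∀ Q : DyadicCube n, μ Q.toSet < ⊤) (hf : MemLp f 2 μ)
    (P : DyadicCube n) :
    (∑ ε : Fin n → Bool, tq μ f (P.child ε)) + Fq μ f P
      = ∑ ε : Fin n → Bool, Fq μ f (P.child ε) := by
  classical
  set b := avg μ f P with hb
  set a : (Fin n → Bool) → ℝ := fun ε => avg μ f (P.child ε) with ha
  set t : (Fin n → Bool) → ℝ := fun ε => (μ (P.child ε).toSet).toReal with htdef
  set tP := (μ P.toSet).toReal with htP
  have hT : tP = ∑ ε, t ε := by
    rw [htP, measure_children P, ENNReal.toReal_sum fun ε _ => (hμ _).ne]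
  have hI : b * tP = ∑ ε, a ε * t ε := by
    rw [hb, htP, avg_mul_toReal hμ P, integral_children hμ hf P]
    exact Finset.sum_congr rfl fun ε _ => (avg_mul_toReal hμ _).symm
  have key : (∑ ε, (b - a ε) ^ 2 * t ε) + b ^ 2 * tP = ∑ ε, (a ε) ^ 2 * t ε := by
    have hexp : (∑ ε, (b - a ε) ^ 2 * t ε)
        = b ^ 2 * (∑ ε, t ε) - 2 * b * (∑ ε, a ε * t ε) + ∑ ε, (a ε) ^ 2 * t ε := by
      rw [Finset.mul_sum, Finset.mul_sum, ← Finset.sum_sub_distrib, ← Finset.sum_add_distrib]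
      exact Finset.sum_congr rfl fun ε _ => by ring
    rw [hexp, ← hT, ← hI]
    ring
  have htq : ∀ ε : Fin n → Bool, tq μ f (P.child ε) = ENNReal.ofReal ((b - a ε) ^ 2 * t ε) := by
    intro ε
    rw [tq, DyadicCube.parent_child, ← ENNReal.ofReal_toReal (hμ (P.child ε)).ne,
      ← ENNReal.ofReal_mul (sq_nonneg _)]
  calc (∑ ε : Fin n → Bool, tq μ f (P.child ε)) + Fq μ f P
      = ENNReal.ofReal (∑ ε, (b - a ε) ^ 2 * t ε) + ENNReal.ofReal (b ^ 2 * tP) := by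
        rw [ENNReal.ofReal_sum_of_nonneg fun ε _ =>
          mul_nonneg (sq_nonneg _) ENNReal.toReal_nonneg]
        rw [Finset.sum_congr rfl fun ε _ => htq ε]
        rfl
    _ = ENNReal.ofReal ((∑ ε, (b - a ε) ^ 2 * t ε) + b ^ 2 * tP) := by
        rw [ENNReal.ofReal_add
          (Finset.sum_nonneg fun ε _ => mul_nonneg (sq_nonneg _) ENNReal.toReal_nonneg)
          (mul_nonneg (sq_nonneg _) ENNReal.toReal_nonneg)]
    _ = ENNReal.ofReal (∑ ε, (a ε) ^ 2 * t ε) := by rw [key]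
    _ = ∑ ε : Fin n → Bool, Fq μ f (P.child ε) := by
        rw [ENNReal.ofReal_sum_of_nonneg fun ε _ =>
          mul_nonneg (sq_nonneg _) ENNReal.toReal_nonneg]
        rfl

lemma level_le (hμ : ∀ Q : DyadicCube n, μ Q.toSet < ⊤) (hf : MemLp f 2 μ) (k : ℤ) :
    ∑' m : Fin n → ℤ, Fq μ f ⟨k, m⟩ ≤ ∫⁻ x, ENNReal.ofReal (f x ^ 2) ∂μ := by
  have hdisj : Pairwise (Function.onFun Disjoint fun m : Fin n → ℤ => (⟨k, m⟩ : DyadicCube n).toSet) := by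
    intro m m' hmm
    exact DyadicCube.disjoint_of_ne rfl fun h => hmm (congrArg DyadicCube.m h)
  calc ∑' m : Fin n → ℤ, Fq μ f ⟨k, m⟩
      ≤ ∑' m : Fin n → ℤ, ∫⁻ x in (⟨k, m⟩ : DyadicCube n).toSet, ENNReal.ofReal (f x ^ 2) ∂μ :=
        ENNReal.tsum_le_tsum fun m => Fq_le_lintegral hμ hf _
    _ = ∫⁻ x in ⋃ m : Fin n → ℤ, (⟨k, m⟩ : DyadicCube n).toSet, ENNReal.ofReal (f x ^ 2) ∂μ :=
        (MeasureTheory.lintegral_iUnion (fun m => DyadicCube.measurableSet_toSet _) hdisj _).symm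
    _ ≤ ∫⁻ x, ENNReal.ofReal (f x ^ 2) ∂μ := MeasureTheory.setLIntegral_le_lintegral _ _

lemma lintegral_sq_eq (f : (Fin n → ℝ) → ℝ) :
    ∫⁻ x, ENNReal.ofReal (f x ^ 2) ∂μ = eLpNorm f 2 μ ^ 2 := by
  rw [MeasureTheory.eLpNorm_eq_lintegral_rpow_enorm_toReal (by norm_num) (by norm_num)]
  have h2 : (2 : ℝ≥0∞).toReal = (2 : ℝ) := by norm_num
  rw [h2]
  rw [← ENNReal.rpow_natCast _ 2, ← ENNReal.rpow_mul]
  norm_num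
  refine (lintegral_congr fun x => ?_)
  rw [← ofReal_norm, ← ENNReal.ofReal_pow (norm_nonneg _)]
  congr 1
  rw [Real.norm_eq_abs, sq_abs]

end Analysis
/-- **Martingale square function estimate.** For a Borel measure `μ` on `ℝⁿ` finite on
dyadic cubes and `f ∈ L²(μ)`, `∑_Q |⟨f⟩^μ_{Q⁽¹⁾} − ⟨f⟩^μ_Q|² μ(Q) ≤ C ‖f‖²_{L²(μ)}`,
with `C` depending only on `n`. -/
theorem martingale_square_function (n : ℕ) :
    ∃ C : ℝ≥0∞, C ≠ ⊤ ∧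
      ∀ μ : Measure (Fin n → ℝ),
        (∀ Q : DyadicCube n, μ Q.toSet < ⊤) →
        ∀ f : (Fin n → ℝ) → ℝ, MemLp f 2 μ →
          ∑' Q : DyadicCube n,
              ENNReal.ofReal ((avg μ f Q.parent - avg μ f Q) ^ 2) * μ Q.toSet
            ≤ C * eLpNorm f 2 μ ^ 2 := by
  refine ⟨1, ENNReal.one_ne_top, fun μ hμ f hf => ?_⟩
  set L := ∫⁻ x, ENNReal.ofReal (f x ^ 2) ∂μ with hL
  set S : ℤ → ℝ≥0∞ := fun k => ∑' m : Fin n → ℤ, Fq μ f ⟨k, m⟩ with hS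
  set T : ℤ → ℝ≥0∞ := fun k => ∑' m : Fin n → ℤ, tq μ f ⟨k, m⟩ with hT
  have htot : (∑' Q : DyadicCube n, tq μ f Q) = ∑' k : ℤ, T k := by
    rw [← Equiv.tsum_eq (cubeEquiv n) (tq μ f), ENNReal.tsum_prod']
    rfl
  have hlev : ∀ k : ℤ, T k + S (k + 1) = S k := by
    intro k
    rw [hT, hS]
    simp only
    rw [tsum_level (tq μ f) k, tsum_level (Fq μ f) k, ← ENNReal.tsum_add]
    exact tsum_congr fun q => parent_identity hμ hf ⟨k + 1, q⟩
  have hSle : ∀ k, S k ≤ L := fun k => level_le hμ hf k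
  have htel : ∀ a b : ℤ, a ≤ b → (∑ k ∈ Finset.Icc a b, T k) + S (b + 1) = S a := by
    intro a b hab
    refine Int.le_induction (motive := fun b _ => (∑ k ∈ Finset.Icc a b, T k) + S (b + 1) = S a) ?_ ?_ b hab
    · show (∑ k ∈ Finset.Icc a a, T k) + S (a + 1) = S a
      rw [Finset.Icc_self, Finset.sum_singleton]; exact hlev a
    · intro b hab ih
      show (∑ k ∈ Finset.Icc a (b + 1), T k) + S (b + 1 + 1) = S a
      have hins : Finset.Icc a (b + 1) = insert (b + 1) (Finset.Icc a b) := by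
        ext x; simp only [Finset.mem_Icc, Finset.mem_insert]; omega
      rw [hins, Finset.sum_insert (by simp only [Finset.mem_Icc]; omega),
        add_comm (T (b + 1)), add_assoc, hlev (b + 1)]
      exact ih
  have hkey : (∑' k : ℤ, T k) ≤ L := by
    refine Summable.tsum_le_of_sum_le ENNReal.summable fun s => ?_
    rcases s.eq_empty_or_nonempty with rfl | hs
    · simp
    · have hab : s.min' hs ≤ s.max' hs := s.min'_le (s.max' hs) (s.max'_mem hs)
      calc ∑ k ∈ s, T k ≤ ∑ k ∈ Finset.Icc (s.min' hs) (s.max' hs), T k :=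
            Finset.sum_le_sum_of_subset fun x hx =>
              Finset.mem_Icc.mpr ⟨s.min'_le x hx, s.le_max' x hx⟩
        _ ≤ (∑ k ∈ Finset.Icc (s.min' hs) (s.max' hs), T k) + S (s.max' hs + 1) := le_self_add
        _ = S (s.min' hs) := htel _ _ hab
        _ ≤ L := hSle _
  calc ∑' Q : DyadicCube n,
        ENNReal.ofReal ((avg μ f Q.parent - avg μ f Q) ^ 2) * μ Q.toSet
      = ∑' k : ℤ, T k := htot
    _ ≤ L := hkey
    _ = eLpNorm f 2 μ ^ 2 := lintegral_sq_eq f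
    _ = 1 * eLpNorm f 2 μ ^ 2 := (one_mul _).symm
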